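/- arXiv:math/0606669 — 3 statements merged into one kernel-verified Lean document; each statement's English description precedes it below -/
import Mathlib

section
/- Let N > 4 and let A : ℝ^N → ℝ^N be measurable, essentially bounded, and such that |A| ∈ L^r(ℝ^N) for some r with 1 < r < N. Define H₂(μ, ξ) = (1/2) ∫_{ℝ^N} |A(x)|² z_{μ,ξ}(x)² dx. Then for every sequence (μ_n, ξ_n) in (0,∞) × ℝ^N with μ_n + |ξ_n| → +∞, one has H₂(μ_n, ξ_n) → 0. -/
open MeasureTheory Complex Filter

noncomputable section

/-- The standard bubble `z_{μ,ξ}`. -/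
def bubble (N : ℕ) (μ : ℝ) (ξ x : EuclideanSpace ℝ (Fin N)) : ℝ :=
  ((N : ℝ) * ((N : ℝ) - 2)) ^ (((N : ℝ) - 2) / 4) * μ ^ (((N : ℝ) - 2) / 2) /
    (μ ^ 2 + ‖x - ξ‖ ^ 2) ^ (((N : ℝ) - 2) / 2)

namespace H2aux

variable {N : ℕ}

def kconst (N : ℕ) : ℝ := ((N : ℝ) * ((N : ℝ) - 2)) ^ (((N : ℝ) - 2) / 4)

def Jint (N : ℕ) (t : ℝ) : ℝ :=
  ∫ u : EuclideanSpace ℝ (Fin N), ((1 : ℝ) + ‖u‖ ^ 2) ^ (-(t * ((N : ℝ) - 2)) / 2)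

lemma Jint_nonneg (t : ℝ) : 0 ≤ Jint N t :=
  integral_nonneg fun x => Real.rpow_nonneg (by positivity) _

lemma kconst_pos (hN : 2 < N) : 0 < kconst N := by
  have h2 : (2 : ℝ) < N := by exact_mod_cast hN
  apply Real.rpow_pos_of_pos; nlinarith

lemma bubble_pos (hN : 2 < N) {μ : ℝ} (hμ : 0 < μ) (ξ x : EuclideanSpace ℝ (Fin N)) :
    0 < bubble N μ ξ x := by
  have h2 : (2 : ℝ) < N := by exact_mod_cast hN
  have h1 : (0:ℝ) < (N : ℝ) * ((N : ℝ) - 2) := by nlinarith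
  have hd : (0:ℝ) < μ ^ 2 + ‖x - ξ‖ ^ 2 := by positivity
  unfold bubble
  positivity

lemma bubble_continuous {μ : ℝ} (hμ : 0 < μ) (ξ : EuclideanSpace ℝ (Fin N)) :
    Continuous (bubble N μ ξ) := by
  apply Continuous.div continuous_const
  · apply Continuous.rpow_const
    · fun_prop
    · intro x; left; positivity
  · intro x
    have hd : (0:ℝ) < μ ^ 2 + ‖x - ξ‖ ^ 2 := by positivity
    exact (Real.rpow_pos_of_pos hd _).ne'

lemma bubble_eq (hN : 2 < N) {μ : ℝ} (hμ : 0 < μ) (ξ x : EuclideanSpace ℝ (Fin N)) :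
    bubble N μ ξ x = kconst N * μ ^ (-(((N : ℝ) - 2) / 2)) *
      ((1 : ℝ) + ‖μ⁻¹ • (x - ξ)‖ ^ 2) ^ (-(((N : ℝ) - 2) / 2)) := by
  set ν : ℝ := ((N : ℝ) - 2) / 2 with hν
  set w : ℝ := (1 : ℝ) + ‖μ⁻¹ • (x - ξ)‖ ^ 2 with hwdef
  have hw : (0:ℝ) < w := by positivity
  have hsplit : μ ^ 2 + ‖x - ξ‖ ^ 2 = μ ^ 2 * w := by
    rw [hwdef, norm_smul]
    have h1 : ‖(μ⁻¹ : ℝ)‖ = μ⁻¹ := by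
      rw [Real.norm_eq_abs, abs_of_pos (by positivity)]
    rw [h1, mul_pow]
    field_simp
  have hb : bubble N μ ξ x = kconst N * μ ^ ν / (μ ^ 2 + ‖x - ξ‖ ^ 2) ^ ν := rfl
  rw [hb, hsplit, Real.mul_rpow (sq_nonneg μ) hw.le, ← Real.rpow_natCast μ 2,
    ← Real.rpow_mul hμ.le, Real.rpow_neg hμ.le, Real.rpow_neg hw.le]
  have hμν : (0:ℝ) < μ ^ ν := Real.rpow_pos_of_pos hμ _
  have hwv : (0:ℝ) < w ^ ν := Real.rpow_pos_of_pos hw _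
  have h2 : μ ^ ((2:ℕ) * ν : ℝ) = μ ^ ν * μ ^ ν := by
    rw [← Real.rpow_add hμ]; norm_num; ring_nf
  rw [h2]
  field_simp

lemma bubble_rpow_eq (hN : 2 < N) {μ : ℝ} (hμ : 0 < μ) (t : ℝ)
    (ξ x : EuclideanSpace ℝ (Fin N)) :
    bubble N μ ξ x ^ t = kconst N ^ t * μ ^ (-(t * ((N : ℝ) - 2)) / 2) *
      ((1 : ℝ) + ‖μ⁻¹ • (x - ξ)‖ ^ 2) ^ (-(t * ((N : ℝ) - 2)) / 2) := by
  set ν : ℝ := ((N : ℝ) - 2) / 2 with hν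
  set w : ℝ := (1 : ℝ) + ‖μ⁻¹ • (x - ξ)‖ ^ 2 with hwdef
  have hw : (0:ℝ) < w := by positivity
  have hκ : 0 < kconst N := kconst_pos hN
  have hμν : (0:ℝ) ≤ μ ^ (-ν) := (Real.rpow_pos_of_pos hμ _).le
  have hwv : (0:ℝ) ≤ w ^ (-ν) := (Real.rpow_pos_of_pos hw _).le
  have he : -ν * t = -(t * ((N : ℝ) - 2)) / 2 := by rw [hν]; ring
  rw [bubble_eq hN hμ ξ x, Real.mul_rpow (by positivity) hwv,
    Real.mul_rpow hκ.le hμν, ← Real.rpow_mul hμ.le, ← Real.rpow_mul hw.le, he]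

lemma integrable_G (hN : 4 < N) {t : ℝ} (ht : (N : ℝ) < t * ((N : ℝ) - 2)) :
    Integrable (fun u : EuclideanSpace ℝ (Fin N) =>
      ((1 : ℝ) + ‖u‖ ^ 2) ^ (-(t * ((N : ℝ) - 2)) / 2)) := by
  apply integrable_rpow_neg_one_add_norm_sq
  rwa [finrank_euclideanSpace_fin]

lemma integrable_bubble_rpow (hN : 4 < N) {t : ℝ} (ht : (N : ℝ) < t * ((N : ℝ) - 2))
    {μ : ℝ} (hμ : 0 < μ) (ξ : EuclideanSpace ℝ (Fin N)) :
    Integrable (fun x => bubble N μ ξ x ^ t) := by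
  have hN2 : 2 < N := by omega
  have hG := integrable_G hN ht
  have hGs : Integrable (fun x : EuclideanSpace ℝ (Fin N) =>
      ((1 : ℝ) + ‖μ⁻¹ • x‖ ^ 2) ^ (-(t * ((N : ℝ) - 2)) / 2)) :=
    (integrable_comp_smul_iff volume _ (inv_ne_zero hμ.ne')).2 hG
  have hGst : Integrable (fun x : EuclideanSpace ℝ (Fin N) =>
      ((1 : ℝ) + ‖μ⁻¹ • (x - ξ)‖ ^ 2) ^ (-(t * ((N : ℝ) - 2)) / 2)) :=
    hGs.comp_sub_right ξ
  have := (hGst.const_mul (kconst N ^ t * μ ^ (-(t * ((N : ℝ) - 2)) / 2)))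
  refine this.congr (Eventually.of_forall fun x => ?_)
  simp only [bubble_rpow_eq hN2 hμ t ξ x]

lemma integral_bubble_rpow (hN : 4 < N) {t : ℝ} (ht : (N : ℝ) < t * ((N : ℝ) - 2))
    {μ : ℝ} (hμ : 0 < μ) (ξ : EuclideanSpace ℝ (Fin N)) :
    ∫ x, bubble N μ ξ x ^ t =
      kconst N ^ t * Jint N t * μ ^ ((N : ℝ) - t * ((N : ℝ) - 2) / 2) := by
  have hN2 : 2 < N := by omega
  calc ∫ x, bubble N μ ξ x ^ t
      = ∫ x, kconst N ^ t * μ ^ (-(t * ((N : ℝ) - 2)) / 2) *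
          ((1 : ℝ) + ‖μ⁻¹ • (x - ξ)‖ ^ 2) ^ (-(t * ((N : ℝ) - 2)) / 2) :=
        integral_congr_ae (Eventually.of_forall fun x => bubble_rpow_eq hN2 hμ t ξ x)
    _ = kconst N ^ t * μ ^ (-(t * ((N : ℝ) - 2)) / 2) *
          ∫ x, ((1 : ℝ) + ‖μ⁻¹ • (x - ξ)‖ ^ 2) ^ (-(t * ((N : ℝ) - 2)) / 2) :=
        integral_const_mul _ _
    _ = kconst N ^ t * μ ^ (-(t * ((N : ℝ) - 2)) / 2) *
          ∫ x, ((1 : ℝ) + ‖μ⁻¹ • x‖ ^ 2) ^ (-(t * ((N : ℝ) - 2)) / 2) := by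
        rw [integral_sub_right_eq_self (fun y : EuclideanSpace ℝ (Fin N) =>
          ((1 : ℝ) + ‖μ⁻¹ • y‖ ^ 2) ^ (-(t * ((N : ℝ) - 2)) / 2)) ξ]
    _ = kconst N ^ t * μ ^ (-(t * ((N : ℝ) - 2)) / 2) * (μ ^ (N : ℕ) * Jint N t) := by
        rw [Measure.integral_comp_smul volume (fun u : EuclideanSpace ℝ (Fin N) =>
          ((1 : ℝ) + ‖u‖ ^ 2) ^ (-(t * ((N : ℝ) - 2)) / 2)) μ⁻¹]
        rw [finrank_euclideanSpace_fin, inv_pow, inv_inv, abs_of_pos (by positivity)]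
        rw [smul_eq_mul]
        rfl
    _ = kconst N ^ t * Jint N t * μ ^ ((N : ℝ) - t * ((N : ℝ) - 2) / 2) := by
        have h1 : kconst N ^ t * μ ^ (-(t * ((N:ℝ)-2))/2) * (μ ^ ((N:ℝ)) * Jint N t)
            = kconst N ^ t * Jint N t * (μ ^ (-(t * ((N:ℝ)-2))/2) * μ ^ ((N:ℝ))) := by ring
        rw [← Real.rpow_natCast μ N, h1, ← Real.rpow_add hμ]
        congr 1
        ring

lemma integrable_bubble_sq (hN : 4 < N) {μ : ℝ} (hμ : 0 < μ)
    (ξ : EuclideanSpace ℝ (Fin N)) :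
    Integrable (fun x => bubble N μ ξ x ^ (2:ℕ)) := by
  have h4 : (4:ℝ) < N := by exact_mod_cast hN
  have ht : (N : ℝ) < 2 * ((N : ℝ) - 2) := by linarith
  refine (integrable_bubble_rpow hN ht hμ ξ).congr (Eventually.of_forall fun x => ?_)
  exact Real.rpow_two _

lemma integral_bubble_sq (hN : 4 < N) {μ : ℝ} (hμ : 0 < μ)
    (ξ : EuclideanSpace ℝ (Fin N)) :
    ∫ x, bubble N μ ξ x ^ (2:ℕ) = kconst N ^ (2:ℝ) * Jint N 2 * μ ^ (2:ℝ) := by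
  have h4 : (4:ℝ) < N := by exact_mod_cast hN
  have ht : (N : ℝ) < 2 * ((N : ℝ) - 2) := by linarith
  have h1 : ∫ x, bubble N μ ξ x ^ (2:ℕ) = ∫ x, bubble N μ ξ x ^ ((2:ℝ)) := by
    refine integral_congr_ae (Eventually.of_forall fun x => ?_)
    exact (Real.rpow_two _).symm
  rw [h1, integral_bubble_rpow hN ht hμ ξ,
    show (N:ℝ) - 2 * ((N:ℝ)-2)/2 = 2 by ring]

lemma memLp_of_integrable_rpow {f : EuclideanSpace ℝ (Fin N) → ℝ} {p : ℝ} (hp : 0 < p)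
    (hm : AEStronglyMeasurable f volume) (h0 : ∀ x, 0 ≤ f x)
    (hi : Integrable (fun x => f x ^ p)) : MemLp f (ENNReal.ofReal p) volume := by
  have hne : ENNReal.ofReal p ≠ 0 := (ENNReal.ofReal_pos.2 hp).ne'
  have h1 : MemLp (fun x => ‖f x‖ ^ (ENNReal.ofReal p).toReal)
      (ENNReal.ofReal p / ENNReal.ofReal p) volume := by
    rw [ENNReal.div_self hne ENNReal.ofReal_ne_top, ENNReal.toReal_ofReal hp.le,
      memLp_one_iff_integrable]
    refine hi.congr (Eventually.of_forall fun x => ?_)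
    simp only [Real.norm_of_nonneg (h0 x)]
  exact (memLp_norm_rpow_iff hm hne ENNReal.ofReal_ne_top).1 h1

lemma holder_piece (hN : 4 < N) {p q : ℝ} (hpq : Real.HolderConjugate p q)
    {g : EuclideanSpace ℝ (Fin N) → ℝ} (hgm : AEStronglyMeasurable g volume)
    (hg0 : ∀ x, 0 ≤ g x) (hgp : Integrable (fun x => g x ^ p))
    {μ : ℝ} (hμ : 0 < μ) (ξ : EuclideanSpace ℝ (Fin N))
    {S : Set (EuclideanSpace ℝ (Fin N))} (hS : MeasurableSet S) :
    ∫ x in S, g x * bubble N μ ξ x ^ (2:ℕ) ≤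
      (∫ x in S, g x ^ p) ^ (1/p) * (∫ x in S, bubble N μ ξ x ^ (2*q)) ^ (1/q) := by
  have hN2 : 2 < N := by omega
  have h4 : (4:ℝ) < N := by exact_mod_cast hN
  have hq1 : 1 < q := hpq.symm.lt
  have hKt : (N : ℝ) < (2*q) * ((N : ℝ) - 2) := by nlinarith
  have hzpos : ∀ x, 0 < bubble N μ ξ x := bubble_pos hN2 hμ ξ
  have hpt : ∀ x, ((bubble N μ ξ x ^ (2:ℕ) : ℝ)) ^ q = bubble N μ ξ x ^ (2*q : ℝ) := by
    intro x
    rw [← Real.rpow_natCast (bubble N μ ξ x) 2, ← Real.rpow_mul (hzpos x).le]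
    norm_num
  have hint2q : Integrable (fun x => bubble N μ ξ x ^ (2*q : ℝ)) :=
    integrable_bubble_rpow hN hKt hμ ξ
  have hzm : AEStronglyMeasurable (fun x => bubble N μ ξ x ^ (2:ℕ)) volume :=
    ((bubble_continuous hμ ξ).pow 2).aestronglyMeasurable
  have hmem1 : MemLp g (ENNReal.ofReal p) volume :=
    memLp_of_integrable_rpow hpq.pos hgm hg0 hgp
  have hmem2 : MemLp (fun x => bubble N μ ξ x ^ (2:ℕ)) (ENNReal.ofReal q) volume := by
    refine memLp_of_integrable_rpow hpq.symm.pos hzm (fun x => by positivity) ?_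
    exact hint2q.congr (Eventually.of_forall fun x => (hpt x).symm)
  have H := integral_mul_le_Lp_mul_Lq_of_nonneg (μ := volume.restrict S) hpq
    (Eventually.of_forall hg0) (Eventually.of_forall fun x => by positivity)
    (hmem1.restrict S) (hmem2.restrict S)
  refine H.trans (le_of_eq ?_)
  congr 1
  refine congrArg (· ^ (1/q)) ?_
  exact integral_congr_ae (Eventually.of_forall fun x => hpt x)

lemma tail_tendsto {G : EuclideanSpace ℝ (Fin N) → ℝ} (hG : Integrable G)
    (hG0 : ∀ x, 0 ≤ G x) {R : ℕ → ℝ} (hR : Tendsto R atTop atTop) :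
    Tendsto (fun k => ∫ x in {x : EuclideanSpace ℝ (Fin N) | R k ≤ ‖x‖}, G x)
      atTop (nhds 0) := by
  have hSm : ∀ k, MeasurableSet {x : EuclideanSpace ℝ (Fin N) | R k ≤ ‖x‖} := fun k =>
    (isClosed_le continuous_const continuous_norm).measurableSet
  have h0 : (0:ℝ) = ∫ x : EuclideanSpace ℝ (Fin N), (0:ℝ) := by simp
  rw [h0]
  simp_rw [← integral_indicator (hSm _)]
  apply tendsto_integral_of_dominated_convergence G
  · intro k; exact hG.1.indicator (hSm k)
  · exact hG
  · intro k
    filter_upwards with x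
    by_cases hx : x ∈ {x : EuclideanSpace ℝ (Fin N) | R k ≤ ‖x‖}
    · simp [Set.indicator_of_mem hx, Real.norm_of_nonneg (hG0 x)]
    · simp [Set.indicator_of_notMem hx, hG0 x]
  · filter_upwards with x
    have hev : ∀ᶠ k in atTop,
        Set.indicator {x : EuclideanSpace ℝ (Fin N) | R k ≤ ‖x‖} G x = 0 := by
      filter_upwards [hR.eventually_gt_atTop ‖x‖] with k hk
      exact Set.indicator_of_notMem (by simp [Set.mem_setOf_eq]; exact hk) G
    exact Tendsto.congr' (hev.mono fun k hk => hk.symm) tendsto_const_nhds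

lemma bubble_le_far (hN : 2 < N) {μ R : ℝ} (hμ : 0 < μ) (hR : 0 < R)
    {ξ x : EuclideanSpace ℝ (Fin N)} (hx : R ≤ ‖x - ξ‖) :
    bubble N μ ξ x ≤ kconst N * μ ^ (((N:ℝ) - 2)/2) / (R ^ 2) ^ (((N:ℝ) - 2)/2) := by
  have h2 : (2 : ℝ) < N := by exact_mod_cast hN
  have hν : (0:ℝ) ≤ ((N:ℝ) - 2)/2 := by linarith
  have hb : bubble N μ ξ x = kconst N * μ ^ (((N:ℝ) - 2)/2) /
      (μ ^ 2 + ‖x - ξ‖ ^ 2) ^ (((N:ℝ) - 2)/2) := rfl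
  rw [hb]
  apply div_le_div_of_nonneg_left
  · exact mul_nonneg (kconst_pos hN).le (Real.rpow_pos_of_pos hμ _).le
  · exact Real.rpow_pos_of_pos (by positivity) _
  · apply Real.rpow_le_rpow (sq_nonneg R) _ hν
    nlinarith [sq_nonneg μ, pow_le_pow_left₀ hR.le hx 2]

lemma far_bound (hN : 4 < N) {q : ℝ} (hq : 1 < q) {μ R : ℝ} (hμ : 0 < μ) (hR : 0 < R)
    (ξ : EuclideanSpace ℝ (Fin N)) :
    ∫ x in {x : EuclideanSpace ℝ (Fin N) | R ≤ ‖x - ξ‖}, bubble N μ ξ x ^ (2*q : ℝ) ≤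
      (kconst N * μ ^ (((N:ℝ) - 2)/2) / (R ^ 2) ^ (((N:ℝ) - 2)/2)) ^ (2*q - 2) *
        (kconst N ^ (2:ℝ) * Jint N 2 * μ ^ (2:ℝ)) := by
  have hN2 : 2 < N := by omega
  have h4 : (4:ℝ) < N := by exact_mod_cast hN
  have hKt : (N : ℝ) < (2*q) * ((N : ℝ) - 2) := by nlinarith
  have hzpos : ∀ x, 0 < bubble N μ ξ x := bubble_pos hN2 hμ ξ
  have hSm : MeasurableSet {x : EuclideanSpace ℝ (Fin N) | R ≤ ‖x - ξ‖} :=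
    (isClosed_le continuous_const (continuous_norm.comp (continuous_id.sub continuous_const))).measurableSet
  set D : ℝ := kconst N * μ ^ (((N:ℝ) - 2)/2) / (R ^ 2) ^ (((N:ℝ) - 2)/2) with hD
  have hDpos : 0 < D := by
    apply div_pos
    · exact mul_pos (kconst_pos hN2) (Real.rpow_pos_of_pos hμ _)
    · exact Real.rpow_pos_of_pos (by positivity) _
  have hpt : ∀ x ∈ {x : EuclideanSpace ℝ (Fin N) | R ≤ ‖x - ξ‖},
      bubble N μ ξ x ^ (2*q : ℝ) ≤ D ^ (2*q - 2) * bubble N μ ξ x ^ (2:ℕ) := by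
    intro x hx
    have h1 : bubble N μ ξ x ^ (2*q : ℝ) =
        bubble N μ ξ x ^ (2*q - 2 : ℝ) * bubble N μ ξ x ^ (2:ℕ) := by
      rw [← Real.rpow_two, ← Real.rpow_add (hzpos x)]
      ring_nf
    rw [h1]
    apply mul_le_mul_of_nonneg_right _ (by positivity)
    exact Real.rpow_le_rpow (hzpos x).le (bubble_le_far hN2 hμ hR hx) (by linarith)
  calc ∫ x in {x : EuclideanSpace ℝ (Fin N) | R ≤ ‖x - ξ‖}, bubble N μ ξ x ^ (2*q : ℝ)
      ≤ ∫ x in {x : EuclideanSpace ℝ (Fin N) | R ≤ ‖x - ξ‖},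
          D ^ (2*q - 2) * bubble N μ ξ x ^ (2:ℕ) := by
        apply setIntegral_mono_on
        · exact (integrable_bubble_rpow hN hKt hμ ξ).integrableOn
        · exact ((integrable_bubble_sq hN hμ ξ).const_mul _).integrableOn
        · exact hSm
        · exact hpt
    _ = D ^ (2*q - 2) * ∫ x in {x : EuclideanSpace ℝ (Fin N) | R ≤ ‖x - ξ‖},
          bubble N μ ξ x ^ (2:ℕ) := integral_const_mul _ _
    _ ≤ D ^ (2*q - 2) * (kconst N ^ (2:ℝ) * Jint N 2 * μ ^ (2:ℝ)) := by
        apply mul_le_mul_of_nonneg_left _ (by positivity)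
        rw [← integral_bubble_sq hN hμ ξ]
        apply setIntegral_le_integral (integrable_bubble_sq hN hμ ξ)
        filter_upwards with x
        positivity

lemma split_bound (hN : 4 < N) {p q : ℝ} (hpq : Real.HolderConjugate p q)
    {g : EuclideanSpace ℝ (Fin N) → ℝ} (hgm : AEStronglyMeasurable g volume)
    (hg0 : ∀ x, 0 ≤ g x) (hgp : Integrable (fun x => g x ^ p))
    {μ : ℝ} (hμ : 0 < μ) {ξ : EuclideanSpace ℝ (Fin N)} (hξ : 0 < ‖ξ‖)
    (hgint : Integrable (fun x => g x * bubble N μ ξ x ^ (2:ℕ))) :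
    ∫ x, g x * bubble N μ ξ x ^ (2:ℕ) ≤
      (∫ x in {x : EuclideanSpace ℝ (Fin N) | ‖ξ‖/2 ≤ ‖x‖}, g x ^ p) ^ (1/p) *
        (kconst N ^ (2*q) * Jint N (2*q) * μ ^ ((N:ℝ) - 2*q*((N:ℝ)-2)/2)) ^ (1/q)
      + (∫ x, g x ^ p) ^ (1/p) *
        ((kconst N * μ ^ (((N:ℝ)-2)/2) / ((‖ξ‖/2)^2) ^ (((N:ℝ)-2)/2)) ^ (2*q-2) *
          (kconst N ^ (2:ℝ) * Jint N 2 * μ ^ (2:ℝ))) ^ (1/q) := by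
  have hN2 : 2 < N := by omega
  have h4 : (4:ℝ) < N := by exact_mod_cast hN
  have hq1 : 1 < q := hpq.symm.lt
  have hKt : (N : ℝ) < (2*q) * ((N : ℝ) - 2) := by nlinarith
  have hRpos : 0 < ‖ξ‖/2 := by linarith
  have hp0 : (0:ℝ) ≤ 1/p := by
    have := hpq.pos; positivity
  have hq0 : (0:ℝ) ≤ 1/q := by
    have := hpq.symm.pos; positivity
  set F : Set (EuclideanSpace ℝ (Fin N)) := {x | ‖ξ‖/2 ≤ ‖x - ξ‖} with hFdef
  have hFm : MeasurableSet F :=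
    (isClosed_le continuous_const
      (continuous_norm.comp (continuous_id.sub continuous_const))).measurableSet
  have hzpos : ∀ x, 0 < bubble N μ ξ x := bubble_pos hN2 hμ ξ
  have hz2q_int : Integrable (fun x => bubble N μ ξ x ^ (2*q : ℝ)) :=
    integrable_bubble_rpow hN hKt hμ ξ
  have hz2q_nonneg : ∀ x, 0 ≤ bubble N μ ξ x ^ (2*q : ℝ) := fun x =>
    Real.rpow_nonneg (hzpos x).le _
  have hsplit := integral_add_compl hFm hgint
  have htailm : MeasurableSet {x : EuclideanSpace ℝ (Fin N) | ‖ξ‖/2 ≤ ‖x‖} :=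
    (isClosed_le continuous_const continuous_norm).measurableSet
  -- far piece
  have hfar : ∫ x in F, g x * bubble N μ ξ x ^ (2:ℕ) ≤
      (∫ x, g x ^ p) ^ (1/p) *
        ((kconst N * μ ^ (((N:ℝ)-2)/2) / ((‖ξ‖/2)^2) ^ (((N:ℝ)-2)/2)) ^ (2*q-2) *
          (kconst N ^ (2:ℝ) * Jint N 2 * μ ^ (2:ℝ))) ^ (1/q) := by
    refine (holder_piece hN hpq hgm hg0 hgp hμ ξ hFm).trans ?_
    apply mul_le_mul
    · apply Real.rpow_le_rpow (setIntegral_nonneg hFm fun x _ => Real.rpow_nonneg (hg0 x) p)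
        _ hp0
      exact setIntegral_le_integral hgp
        (Eventually.of_forall fun x => Real.rpow_nonneg (hg0 x) p)
    · apply Real.rpow_le_rpow (setIntegral_nonneg hFm fun x _ => hz2q_nonneg x) _
        hq0
      exact far_bound hN hq1 hμ hRpos ξ
    · exact Real.rpow_nonneg (setIntegral_nonneg hFm fun x _ => hz2q_nonneg x) _
    · exact Real.rpow_nonneg (integral_nonneg fun x => Real.rpow_nonneg (hg0 x) p) _
  -- near piece
  have hnear : ∫ x in Fᶜ, g x * bubble N μ ξ x ^ (2:ℕ) ≤
      (∫ x in {x : EuclideanSpace ℝ (Fin N) | ‖ξ‖/2 ≤ ‖x‖}, g x ^ p) ^ (1/p) *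
        (kconst N ^ (2*q) * Jint N (2*q) * μ ^ ((N:ℝ) - 2*q*((N:ℝ)-2)/2)) ^ (1/q) := by
    refine (holder_piece hN hpq hgm hg0 hgp hμ ξ hFm.compl).trans ?_
    apply mul_le_mul
    · apply Real.rpow_le_rpow
        (setIntegral_nonneg hFm.compl fun x _ => Real.rpow_nonneg (hg0 x) p) _ hp0
      apply setIntegral_mono_set hgp.integrableOn
        (Eventually.of_forall fun x => Real.rpow_nonneg (hg0 x) p)
      apply HasSubset.Subset.eventuallyLE
      intro x hx
      have hx1 : ‖x - ξ‖ < ‖ξ‖/2 := by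
        have := hx
        simp only [hFdef, Set.mem_compl_iff, Set.mem_setOf_eq, not_le] at this
        exact this
      have hx2 : ‖ξ‖ - ‖x‖ ≤ ‖ξ - x‖ := norm_sub_norm_le _ _
      rw [norm_sub_rev] at hx2
      simp only [Set.mem_setOf_eq]
      linarith
    · apply Real.rpow_le_rpow
        (setIntegral_nonneg hFm.compl fun x _ => hz2q_nonneg x) _ hq0
      refine (setIntegral_le_integral hz2q_int (Eventually.of_forall hz2q_nonneg)).trans ?_
      rw [integral_bubble_rpow hN hKt hμ ξ]
    · exact Real.rpow_nonneg (setIntegral_nonneg hFm.compl fun x _ => hz2q_nonneg x) _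
    · exact Real.rpow_nonneg (setIntegral_nonneg htailm fun x _ => Real.rpow_nonneg (hg0 x) p) _
  calc ∫ x, g x * bubble N μ ξ x ^ (2:ℕ)
      = (∫ x in F, g x * bubble N μ ξ x ^ (2:ℕ)) +
        ∫ x in Fᶜ, g x * bubble N μ ξ x ^ (2:ℕ) := hsplit.symm
    _ ≤ _ := by
        rw [add_comm]
        exact add_le_add hnear hfar

end H2aux

set_option maxHeartbeats 2000000 in
open H2aux in
/-- `H₂(μ,ξ) = (1/2)∫ |A|² z_{μ,ξ}² dx → 0` along any sequence with `μ_n + |ξ_n| → ∞`. -/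
theorem H2_vanishes_at_infinity (N : ℕ) (hN : 4 < N)
    (A : EuclideanSpace ℝ (Fin N) → EuclideanSpace ℝ (Fin N))
    (hmeas : Measurable A)
    (hbdd : ∃ C : ℝ, ∀ᵐ x ∂(volume : Measure (EuclideanSpace ℝ (Fin N))), ‖A x‖ ≤ C)
    (r : ℝ) (hr1 : 1 < r) (hrN : r < N)
    (hLr : Integrable (fun x : EuclideanSpace ℝ (Fin N) => ‖A x‖ ^ r))
    (μn : ℕ → ℝ) (ξn : ℕ → EuclideanSpace ℝ (Fin N))
    (hpos : ∀ n, 0 < μn n)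
    (hinf : Tendsto (fun n => μn n + ‖ξn n‖) atTop atTop) :
    Tendsto (fun n => (1 / 2) * ∫ x, ‖A x‖ ^ 2 * (bubble N (μn n) (ξn n) x) ^ 2)
      atTop (nhds 0) := by
  classical
  obtain ⟨C₀, hC₀⟩ := hbdd
  set B : ℝ := max C₀ 0 with hBdef
  have hB0 : 0 ≤ B := le_max_right _ _
  have hAB : ∀ᵐ x ∂(volume : Measure (EuclideanSpace ℝ (Fin N))), ‖A x‖ ≤ B :=
    hC₀.mono fun x hx => hx.trans (le_max_left _ _)
  have hN2 : 2 < N := by omega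
  have h4 : (4:ℝ) < N := by exact_mod_cast hN
  set g : EuclideanSpace ℝ (Fin N) → ℝ := fun x => ‖A x‖ ^ 2 with hgdef
  have hgmeas : Measurable g := by fun_prop
  have hgm : AEStronglyMeasurable g volume := hgmeas.aestronglyMeasurable
  have hg0 : ∀ x, 0 ≤ g x := fun x => by positivity
  have hgB : ∀ᵐ x ∂(volume : Measure (EuclideanSpace ℝ (Fin N))), g x ≤ B ^ 2 :=
    hAB.mono fun x hx => pow_le_pow_left₀ (norm_nonneg _) hx 2
  -- exponents
  have hmax : max r 2 < (N:ℝ) := max_lt hrN (by linarith)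
  set s : ℝ := (max r 2 + N) / 2 with hsdef
  have hs1 : max r 2 < s := by rw [hsdef]; linarith
  have hsN : s < N := by rw [hsdef]; linarith
  have hs2 : (2:ℝ) < s := lt_of_le_of_lt (le_max_right r 2) hs1
  have hsr : r < s := lt_of_le_of_lt (le_max_left r 2) hs1
  set p : ℝ := s / 2 with hpdef
  have hp1 : 1 < p := by rw [hpdef]; linarith
  have h2p : 2 * p = s := by rw [hpdef]; ring
  set q : ℝ := Real.conjExponent p with hqdef
  have hpq : p.HolderConjugate q := Real.HolderConjugate.conjExponent hp1
  have hq1 : 1 < q := hpq.symm.lt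
  have hq_eq : q = p / (p - 1) := hpq.conjugate_eq
  have hqN : (N:ℝ) < q * ((N:ℝ) - 2) := by
    rw [hq_eq, div_mul_eq_mul_div, lt_div_iff₀ (by linarith : (0:ℝ) < p - 1)]
    nlinarith
  have hν : (0:ℝ) < ((N:ℝ) - 2)/2 := by linarith
  -- integrability of ‖A‖ ^ s and g ^ p
  set B1 : ℝ := max B 1 with hB1def
  have hB11 : (1:ℝ) ≤ B1 := le_max_right _ _
  have hAs : Integrable (fun x => ‖A x‖ ^ s) := by
    apply Integrable.mono' (hLr.const_mul (B1 ^ (s - r)))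
    · exact (by fun_prop : Measurable fun x => ‖A x‖ ^ s).aestronglyMeasurable
    · filter_upwards [hAB] with x hx
      rw [Real.norm_of_nonneg (Real.rpow_nonneg (norm_nonneg _) _)]
      rcases eq_or_lt_of_le (norm_nonneg (A x)) with h0 | h0
      · rw [← h0, Real.zero_rpow (by linarith : s ≠ 0),
          Real.zero_rpow (by linarith : r ≠ 0)]
        simp
      · have hxB1 : ‖A x‖ ≤ B1 := hx.trans (le_max_left _ _)
        calc ‖A x‖ ^ s = ‖A x‖ ^ (s - r) * ‖A x‖ ^ r := by
              rw [← Real.rpow_add h0]; ring_nf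
          _ ≤ B1 ^ (s - r) * ‖A x‖ ^ r := by
              apply mul_le_mul_of_nonneg_right _ (Real.rpow_nonneg (norm_nonneg _) _)
              exact Real.rpow_le_rpow (norm_nonneg _) hxB1 (by linarith)
  have hgp : Integrable (fun x => g x ^ p) := by
    refine hAs.congr (Eventually.of_forall fun x => ?_)
    simp only [hgdef]
    rw [← Real.rpow_two, ← Real.rpow_mul (norm_nonneg _), h2p]
  -- constants
  set c2 : ℝ := kconst N ^ (2:ℝ) * Jint N 2 with hc2
  set eq2 : ℝ := (N:ℝ) - 2*q*((N:ℝ)-2)/2 with heq2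
  have he_neg : eq2 < 0 := by rw [heq2]; nlinarith
  set c2q : ℝ := kconst N ^ (2*q) * Jint N (2*q) with hc2q
  set Kg : ℝ := (∫ x, g x ^ p) ^ (1/p) with hKg
  have hgp_nonneg : 0 ≤ ∫ x, g x ^ p :=
    integral_nonneg fun x => Real.rpow_nonneg (hg0 x) p
  have hKg0 : 0 ≤ Kg := Real.rpow_nonneg hgp_nonneg _
  have hKt : (N:ℝ) < (2*q)*((N:ℝ)-2) := by nlinarith
  -- global integrability of the integrand
  have hIint : ∀ (μ : ℝ), 0 < μ → ∀ ξ, Integrable (fun x => g x * bubble N μ ξ x ^ 2) := by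
    intro μ hμ ξ
    apply Integrable.mono' ((integrable_bubble_sq hN hμ ξ).const_mul (B^2))
    · exact hgm.mul ((bubble_continuous hμ ξ).pow 2).aestronglyMeasurable
    · filter_upwards [hgB] with x hx
      rw [Real.norm_of_nonneg (mul_nonneg (hg0 x) (by positivity))]
      exact mul_le_mul_of_nonneg_right hx (by positivity)
  have hInonneg : ∀ (μ : ℝ) (ξ), 0 ≤ ∫ x, g x * bubble N μ ξ x ^ 2 := fun μ ξ =>
    integral_nonneg fun x => mul_nonneg (hg0 x) (by positivity)
  -- Bound A : small μ
  have hboundA : ∀ (μ : ℝ), 0 < μ → ∀ ξ,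
      ∫ x, g x * bubble N μ ξ x ^ 2 ≤ B^2 * (c2 * μ ^ (2:ℝ)) := by
    intro μ hμ ξ
    have h1 : ∫ x, g x * bubble N μ ξ x ^ 2 ≤ ∫ x, B^2 * bubble N μ ξ x ^ 2 := by
      apply integral_mono_ae (hIint μ hμ ξ) ((integrable_bubble_sq hN hμ ξ).const_mul _)
      filter_upwards [hgB] with x hx
      exact mul_le_mul_of_nonneg_right hx (by positivity)
    rw [integral_const_mul, integral_bubble_sq hN hμ ξ] at h1
    refine h1.trans (le_of_eq ?_)
    rw [hc2, mul_assoc]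
  -- Bound B : Hölder on the whole space
  have hboundB : ∀ (μ : ℝ), 0 < μ → ∀ ξ,
      ∫ x, g x * bubble N μ ξ x ^ 2 ≤ Kg * (c2q * μ ^ eq2) ^ (1/q) := by
    intro μ hμ ξ
    have H := holder_piece hN hpq hgm hg0 hgp hμ ξ MeasurableSet.univ
    rw [Measure.restrict_univ] at H
    refine H.trans (le_of_eq ?_)
    rw [integral_bubble_rpow hN hKt hμ ξ, hKg, hc2q, heq2, mul_assoc]
  -- main0 : μ → 0
  have main0 : ∀ (m : ℕ → ℝ) (ζ : ℕ → EuclideanSpace ℝ (Fin N)), (∀ k, 0 < m k) →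
      Tendsto m atTop (nhds 0) →
      Tendsto (fun k => ∫ x, g x * bubble N (m k) (ζ k) x ^ 2) atTop (nhds 0) := by
    intro m ζ hm hm0
    apply squeeze_zero (fun k => hInonneg _ _) (fun k => hboundA (m k) (hm k) (ζ k))
    have h1 : Tendsto (fun k => (m k) ^ (2:ℝ)) atTop (nhds 0) := by
      have := hm0.rpow_const (p := (2:ℝ)) (Or.inr (by norm_num))
      simpa [Real.zero_rpow (two_ne_zero)] using this
    have h2 := (h1.const_mul c2).const_mul (B^2)
    simpa using h2
  -- mainInf : μ → ∞
  have mainInf : ∀ (m : ℕ → ℝ) (ζ : ℕ → EuclideanSpace ℝ (Fin N)), (∀ k, 0 < m k) →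
      Tendsto m atTop atTop →
      Tendsto (fun k => ∫ x, g x * bubble N (m k) (ζ k) x ^ 2) atTop (nhds 0) := by
    intro m ζ hm hminf
    apply squeeze_zero (fun k => hInonneg _ _) (fun k => hboundB (m k) (hm k) (ζ k))
    have h1 : Tendsto (fun k => (m k) ^ eq2) atTop (nhds 0) := by
      have h2 := (tendsto_rpow_neg_atTop (by linarith : (0:ℝ) < -eq2)).comp hminf
      simpa [Function.comp_def] using h2
    have hq0 : (0:ℝ) ≤ 1/q := by
      have := hpq.symm.pos; positivity
    have h3 := ((h1.const_mul c2q).rpow_const (Or.inr hq0)).const_mul Kg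
    have hq0' : q⁻¹ ≠ 0 := by
      have := hpq.symm.pos; positivity
    simpa [one_div, Real.zero_rpow hq0'] using h3
  -- mainMid : μ → a > 0 and ‖ξ‖ → ∞
  have mainMid : ∀ (m : ℕ → ℝ) (ζ : ℕ → EuclideanSpace ℝ (Fin N)), (∀ k, 0 < m k) →
      ∀ a : ℝ, 0 < a → Tendsto m atTop (nhds a) →
      Tendsto (fun k => ‖ζ k‖) atTop atTop →
      Tendsto (fun k => ∫ x, g x * bubble N (m k) (ζ k) x ^ 2) atTop (nhds 0) := by
    intro m ζ hm a ha hma hζ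
    have hp0 : (0:ℝ) ≤ 1/p := by
      have := hpq.pos; positivity
    have hq0 : (0:ℝ) ≤ 1/q := by
      have := hpq.symm.pos; positivity
    have hineq : ∀ᶠ k in atTop,
        ∫ x, g x * bubble N (m k) (ζ k) x ^ 2 ≤
          (∫ x in {x : EuclideanSpace ℝ (Fin N) | ‖ζ k‖/2 ≤ ‖x‖}, g x ^ p) ^ (1/p) *
            (c2q * (m k) ^ eq2) ^ (1/q)
          + Kg * ((kconst N * (m k) ^ (((N:ℝ)-2)/2) /
              ((‖ζ k‖/2)^2) ^ (((N:ℝ)-2)/2)) ^ (2*q-2) * (c2 * (m k) ^ (2:ℝ))) ^ (1/q) := by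
      filter_upwards [hζ.eventually_gt_atTop 0] with k hζk
      have H := split_bound hN hpq hgm hg0 hgp (hm k) hζk (hIint (m k) (hm k) (ζ k))
      refine H.trans (le_of_eq ?_)
      rw [hc2q, heq2, hKg, hc2, mul_assoc, mul_assoc]
    apply squeeze_zero' (Eventually.of_forall fun k => hInonneg _ _) hineq
    -- limits
    have hζ2 : Tendsto (fun k => ‖ζ k‖/2) atTop atTop := hζ.atTop_div_const two_pos
    have hT1 : Tendsto (fun k =>
        (∫ x in {x : EuclideanSpace ℝ (Fin N) | ‖ζ k‖/2 ≤ ‖x‖}, g x ^ p) ^ (1/p) *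
          (c2q * (m k) ^ eq2) ^ (1/q)) atTop (nhds 0) := by
      have htail : Tendsto (fun k =>
          ∫ x in {x : EuclideanSpace ℝ (Fin N) | ‖ζ k‖/2 ≤ ‖x‖}, g x ^ p) atTop (nhds 0) :=
        tail_tendsto hgp (fun x => Real.rpow_nonneg (hg0 x) p) hζ2
      have h1 := htail.rpow_const (Or.inr hp0)
      rw [Real.zero_rpow (by positivity : (1:ℝ)/p ≠ 0)] at h1
      have h2 : Tendsto (fun k => (c2q * (m k) ^ eq2) ^ (1/q)) atTop
          (nhds ((c2q * a ^ eq2) ^ (1/q))) :=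
        ((hma.rpow_const (Or.inl ha.ne')).const_mul c2q).rpow_const (Or.inr hq0)
      simpa using h1.mul h2
    have hT2 : Tendsto (fun k => Kg *
        ((kconst N * (m k) ^ (((N:ℝ)-2)/2) / ((‖ζ k‖/2)^2) ^ (((N:ℝ)-2)/2)) ^ (2*q-2) *
          (c2 * (m k) ^ (2:ℝ))) ^ (1/q)) atTop (nhds 0) := by
      have hden : Tendsto (fun k => ((‖ζ k‖/2)^2) ^ (((N:ℝ)-2)/2)) atTop atTop :=
        (tendsto_rpow_atTop hν).comp ((tendsto_pow_atTop two_ne_zero).comp hζ2)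
      have hnum : Tendsto (fun k => kconst N * (m k) ^ (((N:ℝ)-2)/2)) atTop
          (nhds (kconst N * a ^ (((N:ℝ)-2)/2))) :=
        (hma.rpow_const (Or.inl ha.ne')).const_mul _
      have hD : Tendsto (fun k =>
          kconst N * (m k) ^ (((N:ℝ)-2)/2) / ((‖ζ k‖/2)^2) ^ (((N:ℝ)-2)/2)) atTop (nhds 0) :=
        hnum.div_atTop hden
      have hDq := hD.rpow_const (Or.inr (by linarith : (0:ℝ) ≤ 2*q-2))
      rw [Real.zero_rpow (by intro h; nlinarith : 2*q-2 ≠ 0)] at hDq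
      have hsq : Tendsto (fun k => c2 * (m k) ^ (2:ℝ)) atTop (nhds (c2 * a ^ (2:ℝ))) :=
        (hma.rpow_const (Or.inr (by norm_num))).const_mul c2
      have hprod := (hDq.mul hsq).rpow_const (Or.inr hq0)
      rw [show (0:ℝ) * (c2 * a ^ (2:ℝ)) = 0 from zero_mul _,
        Real.zero_rpow (by positivity : (1:ℝ)/q ≠ 0)] at hprod
      simpa using hprod.const_mul Kg
    simpa using hT1.add hT2
  -- the key convergence, by the subsequence principle
  have key : Tendsto (fun n => ∫ x, g x * bubble N (μn n) (ξn n) x ^ 2) atTop (nhds 0) := by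
    apply tendsto_of_subseq_tendsto
    intro ns hns
    by_cases hb : BddAbove (Set.range fun n => μn (ns n))
    · obtain ⟨M, hM⟩ := hb
      have hmem : ∀ k, μn (ns k) ∈ Set.Icc (0:ℝ) M := fun k =>
        ⟨(hpos _).le, hM (Set.mem_range_self k)⟩
      obtain ⟨a, ha, φ, hφmono, hconv⟩ :=
        tendsto_subseq_of_bounded (Metric.isBounded_Icc (0:ℝ) M) hmem
      rw [isClosed_Icc.closure_eq] at ha
      refine ⟨φ, ?_⟩
      rcases eq_or_lt_of_le ha.1 with h0 | h0
      · apply main0 _ (fun k => ξn (ns (φ k))) (fun k => hpos _)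
        rw [h0]
        exact hconv
      · have hξφ : Tendsto (fun k => ‖ξn (ns (φ k))‖) atTop atTop := by
          have h1 : Tendsto (fun k => μn (ns (φ k)) + ‖ξn (ns (φ k))‖) atTop atTop :=
            hinf.comp (hns.comp hφmono.tendsto_atTop)
          have h2 := tendsto_atTop_add_const_right atTop (-M) h1
          apply tendsto_atTop_mono _ h2
          intro k
          have := (hmem (φ k)).2
          linarith
        exact mainMid _ _ (fun k => hpos _) a h0 hconv hξφ
    · have hfreq : ∀ k : ℕ, ∃ᶠ n in atTop, (k:ℝ) ≤ μn (ns n) := by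
        intro k
        by_contra hcon
        rw [Filter.not_frequently] at hcon
        obtain ⟨K, hK⟩ := eventually_atTop.1 hcon
        apply hb
        have hsub : (Set.range fun n => μn (ns n)) ⊆
            ((fun n => μn (ns n)) '' Set.Iic K) ∪ Set.Iio (k:ℝ) := by
          rintro y ⟨n, rfl⟩
          by_cases hn : n ≤ K
          · exact Or.inl ⟨n, hn, rfl⟩
          · exact Or.inr (by simpa using not_le.1 (hK n (by omega)))
        exact (((Set.finite_Iic K).image _).bddAbove.union bddAbove_Iio).mono hsub
      obtain ⟨φ, hφmono, hφ⟩ := Filter.extraction_forall_of_frequently hfreq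
      refine ⟨φ, mainInf _ (fun k => ξn (ns (φ k))) (fun k => hpos _) ?_⟩
      exact tendsto_atTop_mono hφ tendsto_natCast_atTop_atTop
  have hfin := key.const_mul (1/2 : ℝ)
  simpa using hfin
end
end

section
/- Let N > 4 and let V : ℝ^N → ℝ be measurable, essentially bounded, and such that V ∈ L^s(ℝ^N) for some s with 1 < s < N/2. Then for every sequence (μ_n, ξ_n) in (0,∞) × ℝ^N with μ_n + |ξ_n| → +∞, one has ∫_{ℝ^N} V(x) z_{μ_n,ξ_n}(x)² dx → 0. -/
open MeasureTheory Complex Filter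

noncomputable section

section AuxLemmas
open Module
def bubbleK (N : ℕ) : ℝ := ((N : ℝ) * ((N : ℝ) - 2)) ^ (((N : ℝ) - 2) / 4)

variable {N : ℕ}

lemma kernel_integrable {p : ℝ} (hp : (N:ℝ) < 2*p) :
    Integrable (fun y : EuclideanSpace ℝ (Fin N) => ((1 + ‖y‖^2) ^ p)⁻¹) := by
  have h : ((finrank ℝ (EuclideanSpace ℝ (Fin N)) : ℝ)) < 2*p := by
    simpa [finrank_euclideanSpace_fin] using hp
  have := integrable_rpow_neg_one_add_norm_sq (E := EuclideanSpace ℝ (Fin N)) (μ := volume) h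
  refine this.congr (Eventually.of_forall fun x => ?_)
  have h0 : (0:ℝ) < 1 + ‖x‖^2 := by positivity
  simp only [← Real.rpow_neg h0.le]
  congr 1
  ring


lemma kernel_pointwise {p μ : ℝ} (hμ : 0 < μ) (x : EuclideanSpace ℝ (Fin N)) :
    ((μ^2 + ‖x‖^2) ^ p)⁻¹ = ((μ^2:ℝ)^p)⁻¹ * ((1 + ‖μ⁻¹ • x‖^2) ^ p)⁻¹ := by
  have h1 : ‖μ⁻¹ • x‖ = μ⁻¹ * ‖x‖ := by
    rw [norm_smul, Real.norm_eq_abs, abs_of_pos (inv_pos.2 hμ)]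
  have h2 : μ^2 + ‖x‖^2 = μ^2 * (1 + ‖μ⁻¹ • x‖^2) := by
    rw [h1]; field_simp
  rw [h2, Real.mul_rpow (by positivity) (by positivity), mul_inv]

lemma kernel_integrable' {p μ : ℝ} (hμ : 0 < μ) (hp : (N:ℝ) < 2*p)
    (ξ : EuclideanSpace ℝ (Fin N)) :
    Integrable (fun x : EuclideanSpace ℝ (Fin N) => ((μ^2 + ‖x - ξ‖^2) ^ p)⁻¹) := by
  have base : Integrable (fun x : EuclideanSpace ℝ (Fin N) => ((μ^2 + ‖x‖^2) ^ p)⁻¹) := by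
    have h0 : Integrable (fun x : EuclideanSpace ℝ (Fin N) =>
        ((μ^2:ℝ)^p)⁻¹ * ((1 + ‖μ⁻¹ • x‖^2) ^ p)⁻¹) := by
      refine Integrable.const_mul ?_ _
      exact (integrable_comp_smul_iff volume
        (fun y : EuclideanSpace ℝ (Fin N) => ((1 + ‖y‖^2) ^ p)⁻¹)
        (inv_ne_zero hμ.ne')).2 (kernel_integrable hp)
    exact h0.congr (Eventually.of_forall fun x => (kernel_pointwise hμ x).symm)
  exact base.comp_sub_right ξ

lemma kernel_integral {p μ : ℝ} (hμ : 0 < μ) (hp : (N:ℝ) < 2*p)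
    (ξ : EuclideanSpace ℝ (Fin N)) :
    ∫ x : EuclideanSpace ℝ (Fin N), ((μ^2 + ‖x - ξ‖^2) ^ p)⁻¹ =
      μ ^ ((N:ℝ) - 2*p) * ∫ y : EuclideanSpace ℝ (Fin N), ((1 + ‖y‖^2) ^ p)⁻¹ := by
  rw [integral_sub_right_eq_self (fun x : EuclideanSpace ℝ (Fin N) => ((μ^2 + ‖x‖^2) ^ p)⁻¹) ξ]
  calc ∫ x : EuclideanSpace ℝ (Fin N), ((μ^2 + ‖x‖^2) ^ p)⁻¹
      = ∫ x : EuclideanSpace ℝ (Fin N), ((μ^2:ℝ)^p)⁻¹ * ((1 + ‖μ⁻¹ • x‖^2) ^ p)⁻¹ := by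
        exact integral_congr_ae (Eventually.of_forall fun x => kernel_pointwise hμ x)
    _ = ((μ^2:ℝ)^p)⁻¹ * ∫ x : EuclideanSpace ℝ (Fin N), ((1 + ‖μ⁻¹ • x‖^2) ^ p)⁻¹ := by
        rw [integral_const_mul]
    _ = μ ^ ((N:ℝ) - 2*p) * ∫ y : EuclideanSpace ℝ (Fin N), ((1 + ‖y‖^2) ^ p)⁻¹ := by
        rw [Measure.integral_comp_inv_smul_of_nonneg volume
          (fun y : EuclideanSpace ℝ (Fin N) => ((1 + ‖y‖^2) ^ p)⁻¹) hμ.le]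
        rw [finrank_euclideanSpace_fin, smul_eq_mul, ← mul_assoc]
        congr 1
        rw [← Real.rpow_natCast μ 2, ← Real.rpow_natCast μ N, ← Real.rpow_mul hμ.le,
          ← Real.rpow_neg hμ.le, ← Real.rpow_add hμ]
        congr 1
        push_cast
        ring

variable {μ : ℝ} {ξ x : EuclideanSpace ℝ (Fin N)}

lemma bubbleK_nonneg (hN : 2 ≤ N) : 0 ≤ bubbleK N := by
  apply Real.rpow_nonneg
  have : (2:ℝ) ≤ N := by exact_mod_cast hN
  nlinarith

lemma bubble_sq (hN : 4 < N) (hμ : 0 < μ) :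
    (bubble N μ ξ x)^2 = (bubbleK N)^2 *
      (μ ^ ((N:ℝ)-2) * (((μ^2 + ‖x - ξ‖^2) ^ ((N:ℝ)-2))⁻¹)) := by
  have hD : (0:ℝ) < μ^2 + ‖x - ξ‖^2 := by positivity
  have e1 : (μ ^ (((N:ℝ)-2)/2))^2 = μ ^ ((N:ℝ)-2) := by
    rw [← Real.rpow_natCast (μ ^ (((N:ℝ)-2)/2)) 2, ← Real.rpow_mul hμ.le]
    norm_num
  have e2 : ((μ^2 + ‖x - ξ‖^2) ^ (((N:ℝ)-2)/2))^2 = (μ^2 + ‖x - ξ‖^2) ^ ((N:ℝ)-2) := by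
    rw [← Real.rpow_natCast ((μ^2 + ‖x - ξ‖^2) ^ (((N:ℝ)-2)/2)) 2, ← Real.rpow_mul hD.le]
    norm_num
  rw [bubble, div_pow, mul_pow, e1, e2, div_eq_mul_inv, bubbleK, mul_assoc]

lemma bubble_sq_rpow (hN : 4 < N) (hμ : 0 < μ) (q : ℝ) :
    ((bubble N μ ξ x)^2)^q = ((bubbleK N)^2)^q *
      (μ ^ (((N:ℝ)-2)*q) * (((μ^2 + ‖x - ξ‖^2) ^ (((N:ℝ)-2)*q))⁻¹)) := by
  have hD : (0:ℝ) < μ^2 + ‖x - ξ‖^2 := by positivity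
  have hK : (0:ℝ) ≤ (bubbleK N)^2 := sq_nonneg _
  rw [bubble_sq hN hμ, Real.mul_rpow hK (by positivity),
    Real.mul_rpow (Real.rpow_nonneg hμ.le _) (by positivity),
    ← Real.rpow_mul hμ.le, Real.inv_rpow (Real.rpow_nonneg hD.le _),
    ← Real.rpow_mul hD.le]

lemma hNr (hN : 4 < N) : (4:ℝ) < (N:ℝ) := by exact_mod_cast hN

lemma int_bubble_sq (hN : 4 < N) (hμ : 0 < μ) (ξ : EuclideanSpace ℝ (Fin N)) :
    Integrable (fun x => (bubble N μ ξ x)^2) ∧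
    ∫ x, (bubble N μ ξ x)^2 =
      (bubbleK N)^2 * (∫ y : EuclideanSpace ℝ (Fin N), ((1 + ‖y‖^2) ^ ((N:ℝ)-2))⁻¹) * μ^2 := by
  have hN' := hNr hN
  have hp : (N:ℝ) < 2*((N:ℝ)-2) := by linarith
  constructor
  · refine ((kernel_integrable' hμ hp ξ).const_mul ((bubbleK N)^2 * μ ^ ((N:ℝ)-2))).congr
      (Eventually.of_forall fun x => ?_)
    dsimp only; rw [bubble_sq hN hμ]; ring
  · calc ∫ x, (bubble N μ ξ x)^2
        = ∫ x : EuclideanSpace ℝ (Fin N), ((bubbleK N)^2 * μ ^ ((N:ℝ)-2)) *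
            ((μ^2 + ‖x - ξ‖^2) ^ ((N:ℝ)-2))⁻¹ := by
          refine integral_congr_ae (Eventually.of_forall fun x => ?_)
          dsimp only; rw [bubble_sq hN hμ]; ring
      _ = ((bubbleK N)^2 * μ ^ ((N:ℝ)-2)) *
            ∫ x : EuclideanSpace ℝ (Fin N), ((μ^2 + ‖x - ξ‖^2) ^ ((N:ℝ)-2))⁻¹ := by
          rw [integral_const_mul]
      _ = _ := by
          rw [kernel_integral hμ hp ξ]
          have : μ ^ ((N:ℝ)-2) * μ ^ ((N:ℝ) - 2*((N:ℝ)-2)) = μ^2 := by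
            rw [← Real.rpow_add hμ]
            have h2 : (N:ℝ)-2 + ((N:ℝ) - 2*((N:ℝ)-2)) = (2:ℕ) := by push_cast; ring
            rw [h2, Real.rpow_natCast]
          rw [← this]; ring

lemma int_bubble_sq_rpow (hN : 4 < N) (hμ : 0 < μ) {q : ℝ} (hq : 1 ≤ q)
    (ξ : EuclideanSpace ℝ (Fin N)) :
    Integrable (fun x => ((bubble N μ ξ x)^2)^q) ∧
    ∫ x, ((bubble N μ ξ x)^2)^q =
      ((bubbleK N)^2)^q * (∫ y : EuclideanSpace ℝ (Fin N), ((1 + ‖y‖^2) ^ (((N:ℝ)-2)*q))⁻¹) *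
        μ ^ ((N:ℝ) - ((N:ℝ)-2)*q) := by
  have hN' := hNr hN
  have hp : (N:ℝ) < 2*(((N:ℝ)-2)*q) := by nlinarith
  constructor
  · refine ((kernel_integrable' hμ hp ξ).const_mul (((bubbleK N)^2)^q * μ ^ (((N:ℝ)-2)*q))).congr
      (Eventually.of_forall fun x => ?_)
    dsimp only; rw [bubble_sq_rpow hN hμ]; ring
  · calc ∫ x, ((bubble N μ ξ x)^2)^q
        = ∫ x : EuclideanSpace ℝ (Fin N), (((bubbleK N)^2)^q * μ ^ (((N:ℝ)-2)*q)) *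
            ((μ^2 + ‖x - ξ‖^2) ^ (((N:ℝ)-2)*q))⁻¹ := by
          refine integral_congr_ae (Eventually.of_forall fun x => ?_)
          dsimp only; rw [bubble_sq_rpow hN hμ]; ring
      _ = (((bubbleK N)^2)^q * μ ^ (((N:ℝ)-2)*q)) *
            ∫ x : EuclideanSpace ℝ (Fin N), ((μ^2 + ‖x - ξ‖^2) ^ (((N:ℝ)-2)*q))⁻¹ := by
          rw [integral_const_mul]
      _ = _ := by
          rw [kernel_integral hμ hp ξ]
          have : μ ^ (((N:ℝ)-2)*q) * μ ^ ((N:ℝ) - 2*(((N:ℝ)-2)*q)) = μ ^ ((N:ℝ) - ((N:ℝ)-2)*q) := by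
            rw [← Real.rpow_add hμ]; congr 1; ring
          rw [← this]; ring

section Aux2
variable {μ : ℝ} {ξ x : EuclideanSpace ℝ (Fin N)}


lemma bubble_continuous (hμ : 0 < μ) : Continuous (fun x => bubble N μ ξ x) := by
  unfold bubble
  apply continuous_const.div
  · refine Continuous.rpow_const ?_ fun x => Or.inl ?_
    · fun_prop
    · positivity
  · intro x
    have h0 : (0:ℝ) < μ ^ 2 + ‖x - ξ‖ ^ 2 := by positivity
    positivity

lemma bubble_nonneg (hN : 2 ≤ N) (hμ : 0 < μ) : 0 ≤ bubble N μ ξ x := by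
  have h2 : (2:ℝ) ≤ N := by exact_mod_cast hN
  have h0 : (0:ℝ) < μ ^ 2 + ‖x - ξ‖ ^ 2 := by positivity
  have hK : (0:ℝ) ≤ ((N : ℝ) * ((N : ℝ) - 2)) ^ (((N : ℝ) - 2) / 4) :=
    Real.rpow_nonneg (by nlinarith) _
  unfold bubble
  positivity

lemma tail_tendsto {f : EuclideanSpace ℝ (Fin N) → ℝ} (hf : Integrable f) :
    Tendsto (fun k : ℕ => ∫ x in (Metric.ball (0 : EuclideanSpace ℝ (Fin N)) k)ᶜ, f x)
      atTop (nhds 0) := by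
  have hmono : Monotone (fun k : ℕ => Metric.ball (0 : EuclideanSpace ℝ (Fin N)) k) := by
    intro a b hab
    exact Metric.ball_subset_ball (by exact_mod_cast hab)
  have h1 := tendsto_setIntegral_of_monotone
    (fun k : ℕ => measurableSet_ball (x := (0 : EuclideanSpace ℝ (Fin N))) (ε := k))
    hmono hf.integrableOn
  rw [Metric.iUnion_ball_nat, setIntegral_univ] at h1
  have h2 : ∀ k : ℕ, ∫ x in (Metric.ball (0 : EuclideanSpace ℝ (Fin N)) k)ᶜ, f x =
      (∫ x, f x) - ∫ x in Metric.ball (0 : EuclideanSpace ℝ (Fin N)) k, f x := by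
    intro k
    rw [← integral_add_compl (measurableSet_ball (x := (0 : EuclideanSpace ℝ (Fin N)))
      (ε := (k:ℝ))) hf]
    ring
  simp only [h2]
  simpa using (tendsto_const_nhds (x := ∫ x, f x) (f := atTop)).sub h1

lemma bubble_sq_le_far (hN : 4 < N) (hμ : 0 < μ) {R : ℝ} (hx : ‖x‖ < R) (hR : R < μ + ‖ξ‖) :
    (bubble N μ ξ x)^2 ≤ (((N : ℝ) * ((N : ℝ) - 2)) ^ (((N : ℝ) - 2) / 4))^2 *
      (((μ + ‖ξ‖ - R)/2) ^ ((N:ℝ)-2))⁻¹ := by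
  have hN' : (4:ℝ) < (N:ℝ) := by exact_mod_cast hN
  set r := ‖x - ξ‖ with hr
  have hr0 : 0 ≤ r := norm_nonneg _
  have hru : ‖ξ‖ - R ≤ r := by
    have h2 : ‖ξ‖ - ‖x‖ ≤ ‖ξ - x‖ := norm_sub_norm_le ξ x
    rw [norm_sub_rev] at h2
    linarith
  set m := (μ + ‖ξ‖ - R)/2 with hm
  have hm0 : 0 < m := by simp only [hm]; linarith
  have hD : (0:ℝ) < μ^2 + r^2 := by positivity
  have hDm : m^2 ≤ μ^2 + r^2 := by
    rcases le_or_gt (‖ξ‖ - R) μ with h | h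
    · nlinarith
    · nlinarith
  have hDμ : μ^2 ≤ μ^2 + r^2 := by nlinarith
  set K := ((N : ℝ) * ((N : ℝ) - 2)) ^ (((N : ℝ) - 2) / 4) with hK
  have hKnn : (0:ℝ) ≤ K := Real.rpow_nonneg (by nlinarith) _
  -- rewrite bubble squared
  have e1 : (μ ^ (((N:ℝ)-2)/2))^2 = μ ^ ((N:ℝ)-2) := by
    rw [← Real.rpow_natCast (μ ^ (((N:ℝ)-2)/2)) 2, ← Real.rpow_mul hμ.le]; norm_num
  have e2 : ((μ^2 + r^2) ^ (((N:ℝ)-2)/2))^2 = (μ^2 + r^2) ^ ((N:ℝ)-2) := by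
    rw [← Real.rpow_natCast ((μ^2 + r^2) ^ (((N:ℝ)-2)/2)) 2, ← Real.rpow_mul hD.le]; norm_num
  have hbs : (bubble N μ ξ x)^2 = K^2 * (μ ^ ((N:ℝ)-2) * (((μ^2 + r^2) ^ ((N:ℝ)-2))⁻¹)) := by
    rw [bubble, div_pow, mul_pow, e1, e2, div_eq_mul_inv, mul_assoc]
  rw [hbs]
  refine mul_le_mul_of_nonneg_left ?_ (sq_nonneg K)
  -- μ^{N-2} ≤ (μ²+r²)^{(N-2)/2}
  have h1 : μ ^ ((N:ℝ)-2) ≤ (μ^2 + r^2) ^ (((N:ℝ)-2)/2) := by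
    have : μ ^ ((N:ℝ)-2) = (μ^2) ^ (((N:ℝ)-2)/2) := by
      rw [← Real.rpow_natCast μ 2, ← Real.rpow_mul hμ.le]; congr 1; ring
    rw [this]
    exact Real.rpow_le_rpow (by positivity) hDμ (by linarith)
  have h2 : (m^2) ^ (((N:ℝ)-2)/2) ≤ (μ^2 + r^2) ^ (((N:ℝ)-2)/2) :=
    Real.rpow_le_rpow (by positivity) hDm (by linarith)
  have hm2 : (m^2) ^ (((N:ℝ)-2)/2) = m ^ ((N:ℝ)-2) := by
    rw [← Real.rpow_natCast m 2, ← Real.rpow_mul hm0.le]; congr 1; ring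
  have hDpow : (0:ℝ) < (μ^2 + r^2) ^ ((N:ℝ)-2) := Real.rpow_pos_of_pos hD _
  have hmpow : (0:ℝ) < m ^ ((N:ℝ)-2) := Real.rpow_pos_of_pos hm0 _
  calc μ ^ ((N:ℝ)-2) * ((μ^2 + r^2) ^ ((N:ℝ)-2))⁻¹
      ≤ (μ^2 + r^2) ^ (((N:ℝ)-2)/2) * ((μ^2 + r^2) ^ ((N:ℝ)-2))⁻¹ :=
        mul_le_mul_of_nonneg_right h1 (by positivity)
    _ = ((μ^2 + r^2) ^ (((N:ℝ)-2)/2))⁻¹ := by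
        rw [← Real.rpow_neg hD.le, ← Real.rpow_add hD, ← Real.rpow_neg hD.le]
        congr 1; ring
    _ ≤ (m ^ ((N:ℝ)-2))⁻¹ := by
        rw [← hm2]
        exact inv_anti₀ (Real.rpow_pos_of_pos (by positivity) _) h2

end Aux2

end AuxLemmas


lemma young_split {N : ℕ} {W Z : EuclideanSpace ℝ (Fin N) → ℝ} {s q t : ℝ}
    (hpq : s.HolderConjugate q) (ht : 0 < t)
    (hW : ∀ x, 0 ≤ W x) (hZ : ∀ x, 0 ≤ Z x)
    (hWZ : Integrable (fun x => W x * Z x))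
    (hWs : Integrable (fun x => W x ^ s))
    (hZq : Integrable (fun x => Z x ^ q))
    (A : Set (EuclideanSpace ℝ (Fin N))) :
    ∫ x in A, W x * Z x ≤
      (t^s/s * ∫ x in A, W x ^ s) + (t^q)⁻¹/q * ∫ x, Z x ^ q := by
  have hs0 : 0 < s := hpq.pos
  have hq0 : 0 < q := hpq.symm.pos
  have hg1int : Integrable (fun x : EuclideanSpace ℝ (Fin N) => t^s/s * W x ^ s) :=
    hWs.const_mul _
  have hg2int : Integrable (fun x : EuclideanSpace ℝ (Fin N) => (t^q)⁻¹/q * Z x ^ q) :=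
    hZq.const_mul _
  have young : ∀ x, W x * Z x ≤ t^s/s * W x ^ s + (t^q)⁻¹/q * Z x ^ q := by
    intro x
    have h := Real.young_inequality_of_nonneg (a := t * W x) (b := Z x / t)
      (mul_nonneg ht.le (hW x)) (div_nonneg (hZ x) ht.le) hpq
    have e1 : (t * W x)^s = t^s * W x ^ s := Real.mul_rpow ht.le (hW x)
    have e2 : (Z x / t)^q = Z x ^ q / t^q := Real.div_rpow (hZ x) ht.le _
    have e3 : W x * Z x = (t * W x) * (Z x / t) := by field_simp
    rw [e3]
    refine le_trans h (le_of_eq ?_)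
    rw [e1, e2]
    ring
  calc ∫ x in A, W x * Z x
      ≤ ∫ x in A, (t^s/s * W x ^ s + (t^q)⁻¹/q * Z x ^ q) :=
        setIntegral_mono_ae_restrict hWZ.integrableOn
          ((hg1int.add hg2int).integrableOn) (Eventually.of_forall fun x => young x)
    _ = (∫ x in A, t^s/s * W x ^ s) + ∫ x in A, (t^q)⁻¹/q * Z x ^ q :=
        integral_add hg1int.integrableOn hg2int.integrableOn
    _ ≤ (t^s/s * ∫ x in A, W x ^ s) + (t^q)⁻¹/q * ∫ x, Z x ^ q := by
        rw [integral_const_mul, integral_const_mul]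
        have h3 : 0 < t^q := Real.rpow_pos_of_pos ht q
        have htqq : (0:ℝ) ≤ (t^q)⁻¹/q := by positivity
        have h4 : ∫ x in A, Z x ^ q ≤ ∫ x, Z x ^ q :=
          setIntegral_le_integral hZq (Eventually.of_forall fun x => Real.rpow_nonneg (hZ x) q)
        have h5 := mul_le_mul_of_nonneg_left h4 htqq
        linarith

set_option maxHeartbeats 1000000 in
/-- `∫ V z_{μ,ξ}² dx → 0` along any sequence with `μ_n + |ξ_n| → ∞`. -/
theorem V_integral_vanishes_at_infinity (N : ℕ) (hN : 4 < N)
    (V : EuclideanSpace ℝ (Fin N) → ℝ)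
    (hmeas : Measurable V)
    (hbdd : ∃ C : ℝ, ∀ᵐ x ∂(volume : Measure (EuclideanSpace ℝ (Fin N))), |V x| ≤ C)
    (s : ℝ) (hs1 : 1 < s) (hsN : s < (N : ℝ) / 2)
    (hLs : Integrable (fun x : EuclideanSpace ℝ (Fin N) => |V x| ^ s))
    (μn : ℕ → ℝ) (ξn : ℕ → EuclideanSpace ℝ (Fin N))
    (hpos : ∀ n, 0 < μn n)
    (hinf : Tendsto (fun n => μn n + ‖ξn n‖) atTop atTop) :
    Tendsto (fun n => ∫ x, V x * (bubble N (μn n) (ξn n) x) ^ 2) atTop (nhds 0) := by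
  obtain ⟨C₀, hC₀⟩ := hbdd
  set C : ℝ := max C₀ 0 with hCdef
  have hC0 : (0:ℝ) ≤ C := le_max_right _ _
  have hC : ∀ᵐ x ∂(volume : Measure (EuclideanSpace ℝ (Fin N))), |V x| ≤ C :=
    hC₀.mono fun x hx => le_trans hx (le_max_left _ _)
  set q : ℝ := Real.conjExponent s with hqdef
  have hpq : s.HolderConjugate q := Real.HolderConjugate.conjExponent hs1
  have hq1 : 1 < q := hpq.symm.lt
  have hq0 : 0 < q := by linarith
  have hs0 : 0 < s := by linarith
  have hN' : (4:ℝ) < N := by exact_mod_cast hN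
  have hqN : (N:ℝ) < ((N:ℝ)-2) * q := by
    have hq : ((N:ℝ)-2)*q = ((N:ℝ)-2)*s/(s-1) := by
      rw [hqdef, Real.conjExponent]; ring
    rw [hq, lt_div_iff₀ (by linarith : (0:ℝ) < s - 1)]
    nlinarith
  have he : (N:ℝ) - ((N:ℝ)-2)*q < 0 := by linarith
  set K2 : ℝ := (bubbleK N)^2 with hK2def
  have hK2 : (0:ℝ) ≤ K2 := sq_nonneg _
  set J₁ : ℝ := ∫ y : EuclideanSpace ℝ (Fin N), ((1+‖y‖^2) ^ ((N:ℝ)-2))⁻¹ with hJ₁def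
  have hJ₁ : 0 ≤ J₁ := integral_nonneg fun y => by positivity
  set J₂ : ℝ := ∫ y : EuclideanSpace ℝ (Fin N), ((1+‖y‖^2) ^ (((N:ℝ)-2)*q))⁻¹ with hJ₂def
  have hJ₂ : 0 ≤ J₂ := integral_nonneg fun y => by positivity
  clear_value C
  have hzcont : ∀ n, Continuous (fun x => bubble N (μn n) (ξn n) x) :=
    fun n => bubble_continuous (hpos n)
  have hz2int : ∀ n, Integrable (fun x : EuclideanSpace ℝ (Fin N) =>
      (bubble N (μn n) (ξn n) x)^2) := fun n => (int_bubble_sq hN (hpos n) _).1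
  have hz2val : ∀ n, ∫ x : EuclideanSpace ℝ (Fin N), (bubble N (μn n) (ξn n) x)^2 =
      K2 * J₁ * (μn n)^2 := by
    intro n
    rw [(int_bubble_sq hN (hpos n) (ξn n)).2]
  have hzqint : ∀ n, Integrable (fun x : EuclideanSpace ℝ (Fin N) =>
      ((bubble N (μn n) (ξn n) x)^2)^q) :=
    fun n => (int_bubble_sq_rpow hN (hpos n) hq1.le _).1
  have hzqval : ∀ n, ∫ x : EuclideanSpace ℝ (Fin N), ((bubble N (μn n) (ξn n) x)^2)^q =
      K2^q * J₂ * (μn n) ^ ((N:ℝ) - ((N:ℝ)-2)*q) := by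
    intro n
    rw [(int_bubble_sq_rpow hN (hpos n) hq1.le (ξn n)).2]
  clear_value K2 J₁ J₂
  have hWz : ∀ n, Integrable (fun x : EuclideanSpace ℝ (Fin N) =>
      |V x| * (bubble N (μn n) (ξn n) x)^2) := by
    intro n
    refine Integrable.mono' ((hz2int n).const_mul C)
      (hmeas.abs.mul (((hzcont n).pow 2).measurable)).aestronglyMeasurable ?_
    filter_upwards [hC] with x hx
    rw [Real.norm_eq_abs, _root_.abs_mul, _root_.abs_abs,
      _root_.abs_of_nonneg (sq_nonneg (bubble N (μn n) (ξn n) x))]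
    exact mul_le_mul_of_nonneg_right hx (sq_nonneg _)
  have hVz : ∀ n, Integrable (fun x : EuclideanSpace ℝ (Fin N) =>
      V x * (bubble N (μn n) (ξn n) x)^2) := by
    intro n
    refine Integrable.mono' ((hz2int n).const_mul C)
      (hmeas.mul (((hzcont n).pow 2).measurable)).aestronglyMeasurable ?_
    filter_upwards [hC] with x hx
    rw [Real.norm_eq_abs, _root_.abs_mul,
      _root_.abs_of_nonneg (sq_nonneg (bubble N (μn n) (ξn n) x))]
    exact mul_le_mul_of_nonneg_right hx (sq_nonneg _)
  rw [Metric.tendsto_atTop]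
  intro ε hε
  -- choice of δ
  set A : ℝ := C * K2 * J₁ with hAdef
  have hA : 0 ≤ A := by positivity
  set δ : ℝ := Real.sqrt (ε / (3*(A+1))) with hδdef
  have hδ : 0 < δ := Real.sqrt_pos.2 (by positivity)
  have hδbound : A * δ^2 < ε := by
    rw [hδdef, Real.sq_sqrt (by positivity), mul_div_assoc']
    rw [div_lt_iff₀ (by positivity)]
    nlinarith
  clear_value A δ
  -- bound C6 for the q-integral when δ ≤ μ
  set C6 : ℝ := K2^q * J₂ * δ ^ ((N:ℝ) - ((N:ℝ)-2)*q) with hC6def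
  have hC6nn : 0 ≤ C6 := by positivity
  have hC6bound : ∀ n, δ ≤ μn n →
      ∫ x : EuclideanSpace ℝ (Fin N), ((bubble N (μn n) (ξn n) x)^2)^q ≤ C6 := by
    intro n hle
    rw [hzqval n, hC6def]
    have hμe : (μn n) ^ ((N:ℝ) - ((N:ℝ)-2)*q) ≤ δ ^ ((N:ℝ) - ((N:ℝ)-2)*q) := by
      have hme : (0:ℝ) ≤ -((N:ℝ) - ((N:ℝ)-2)*q) := by linarith
      have h1 : δ ^ (-((N:ℝ) - ((N:ℝ)-2)*q)) ≤ (μn n) ^ (-((N:ℝ) - ((N:ℝ)-2)*q)) :=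
        Real.rpow_le_rpow hδ.le hle hme
      calc (μn n) ^ ((N:ℝ) - ((N:ℝ)-2)*q)
          = ((μn n) ^ (-((N:ℝ) - ((N:ℝ)-2)*q)))⁻¹ := by
            rw [← Real.rpow_neg (hpos n).le, neg_neg]
        _ ≤ (δ ^ (-((N:ℝ) - ((N:ℝ)-2)*q)))⁻¹ :=
            inv_anti₀ (Real.rpow_pos_of_pos hδ _) h1
        _ = δ ^ ((N:ℝ) - ((N:ℝ)-2)*q) := by
            rw [← Real.rpow_neg hδ.le, neg_neg]
    exact mul_le_mul_of_nonneg_left hμe (by positivity)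
  clear_value C6
  -- choice of t
  set B : ℝ := C6/q + 1 with hBdef
  have hB : 0 < B := by positivity
  clear_value B
  set t : ℝ := (6*B/ε) ^ (1/q) with htdef
  have ht : 0 < t := Real.rpow_pos_of_pos (by positivity) _
  have htq : t ^ q = 6*B/ε := by
    rw [htdef, ← Real.rpow_mul (by positivity), one_div_mul_cancel (ne_of_gt hq0),
      Real.rpow_one]
  clear_value t
  have hterm2 : (t^q)⁻¹ * (C6/q) ≤ ε/6 := by
    rw [htq]
    have h1 : C6/q ≤ B := by rw [hBdef]; linarith
    calc (6*B/ε)⁻¹ * (C6/q) ≤ (6*B/ε)⁻¹ * B :=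
          mul_le_mul_of_nonneg_left h1 (by positivity)
      _ = ε/6 := by
          rw [inv_div]
          field_simp
  -- choice of R via the tail of |V|^s
  have htail := tail_tendsto (N := N) hLs
  have hε0p : (0:ℝ) < ε/6 * s / t^s := by positivity
  obtain ⟨R, hRtail⟩ := (htail.eventually (gt_mem_nhds hε0p)).exists
  set volR : ℝ := (volume (Metric.ball (0:EuclideanSpace ℝ (Fin N)) (R:ℝ))).toReal with hvolRdef
  have hvolR : 0 ≤ volR := ENNReal.toReal_nonneg
  clear_value volR
  -- choice of M
  have hφ : Tendsto (fun u : ℝ => C * K2 * volR * (((u - (R:ℝ))/2) ^ ((N:ℝ)-2))⁻¹)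
      atTop (nhds 0) := by
    have h1 : Tendsto (fun u : ℝ => (u - (R:ℝ))/2) atTop atTop :=
      (tendsto_atTop_add_const_right _ _ tendsto_id).atTop_div_const (by norm_num)
    have h2 : Tendsto (fun u : ℝ => (((u - (R:ℝ))/2) ^ ((N:ℝ)-2))⁻¹) atTop (nhds 0) :=
      ((tendsto_rpow_atTop (by linarith)).comp h1).inv_tendsto_atTop
    simpa using h2.const_mul (C * K2 * volR)
  obtain ⟨M, hM⟩ := eventually_atTop.1 (hφ.eventually (gt_mem_nhds (by positivity : (0:ℝ) < ε/3)))
  obtain ⟨n₀, hn₀⟩ := eventually_atTop.1 (hinf.eventually_ge_atTop (max M ((R:ℝ)+1)))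
  refine ⟨n₀, fun n hn => ?_⟩
  have hρ := hn₀ n hn
  have hρM : M ≤ μn n + ‖ξn n‖ := le_trans (le_max_left _ _) hρ
  have hρR : (R:ℝ)+1 ≤ μn n + ‖ξn n‖ := le_trans (le_max_right _ _) hρ
  rw [Real.dist_eq, sub_zero]
  have habs : |∫ x, V x * (bubble N (μn n) (ξn n) x)^2| ≤
      ∫ x, |V x| * (bubble N (μn n) (ξn n) x)^2 := by
    rw [← Real.norm_eq_abs]
    refine le_trans (norm_integral_le_integral_norm _) (le_of_eq ?_)
    refine integral_congr_ae (Eventually.of_forall fun x => ?_)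
    dsimp only
    rw [Real.norm_eq_abs, _root_.abs_mul,
      _root_.abs_of_nonneg (sq_nonneg (bubble N (μn n) (ξn n) x))]
  refine lt_of_le_of_lt habs ?_
  rcases le_or_gt (μn n) δ with hcase | hcase
  · -- small μ
    calc ∫ x, |V x| * (bubble N (μn n) (ξn n) x)^2
        ≤ ∫ x, C * (bubble N (μn n) (ξn n) x)^2 := by
          refine integral_mono_ae (hWz n) ((hz2int n).const_mul C) ?_
          filter_upwards [hC] with x hx
          exact mul_le_mul_of_nonneg_right hx (sq_nonneg _)
      _ = C * ∫ x, (bubble N (μn n) (ξn n) x)^2 := integral_const_mul C _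
      _ = A * (μn n)^2 := by rw [hz2val n, hAdef]; ring
      _ ≤ A * δ^2 := by
          have h2 : (μn n)^2 ≤ δ^2 := by nlinarith [hpos n]
          exact mul_le_mul_of_nonneg_left h2 hA
      _ < ε := hδbound
  · -- large μ: split at the ball of radius R
    have hR1 : (R:ℝ) < μn n + ‖ξn n‖ := by linarith
    rw [← integral_add_compl
      (measurableSet_ball (x := (0:EuclideanSpace ℝ (Fin N))) (ε := (R:ℝ))) (hWz n)]
    have hfar : ∀ x ∈ Metric.ball (0:EuclideanSpace ℝ (Fin N)) (R:ℝ),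
        (bubble N (μn n) (ξn n) x)^2 ≤
          K2 * (((μn n + ‖ξn n‖ - (R:ℝ))/2) ^ ((N:ℝ)-2))⁻¹ := by
      intro x hx
      have hxn : ‖x‖ < (R:ℝ) := by
        rwa [Metric.mem_ball, dist_zero_right] at hx
      rw [hK2def, bubbleK]
      exact bubble_sq_le_far hN (hpos n) hxn hR1
    have hb1 : ∫ x in Metric.ball (0:EuclideanSpace ℝ (Fin N)) (R:ℝ),
        |V x| * (bubble N (μn n) (ξn n) x)^2 < ε/3 := by
      have step : ∫ x in Metric.ball (0:EuclideanSpace ℝ (Fin N)) (R:ℝ),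
          |V x| * (bubble N (μn n) (ξn n) x)^2 ≤
          ∫ _x in Metric.ball (0:EuclideanSpace ℝ (Fin N)) (R:ℝ),
            C * (K2 * (((μn n + ‖ξn n‖ - (R:ℝ))/2) ^ ((N:ℝ)-2))⁻¹) := by
        refine setIntegral_mono_ae_restrict ((hWz n).integrableOn)
          (integrableOn_const measure_ball_lt_top.ne) ?_
        filter_upwards [ae_restrict_of_ae hC, ae_restrict_mem measurableSet_ball]
          with x hx hmem
        exact mul_le_mul hx (hfar x hmem) (sq_nonneg _) hC0
      rw [setIntegral_const, smul_eq_mul, measureReal_def, ← hvolRdef] at step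
      refine lt_of_le_of_lt step ?_
      have := hM (μn n + ‖ξn n‖) hρM
      calc volR * (C * (K2 * (((μn n + ‖ξn n‖ - (R:ℝ))/2) ^ ((N:ℝ)-2))⁻¹))
          = C * K2 * volR * (((μn n + ‖ξn n‖ - (R:ℝ))/2) ^ ((N:ℝ)-2))⁻¹ := by ring
        _ < ε/3 := this
    have hb2 : ∫ x in (Metric.ball (0:EuclideanSpace ℝ (Fin N)) (R:ℝ))ᶜ,
        |V x| * (bubble N (μn n) (ξn n) x)^2 < ε/6 + ε/6 := by
      have hsplit := young_split (W := fun x => |V x|)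
        (Z := fun x => (bubble N (μn n) (ξn n) x)^2) hpq ht
        (fun x => abs_nonneg _) (fun x => sq_nonneg _) (hWz n) hLs (hzqint n)
        ((Metric.ball (0:EuclideanSpace ℝ (Fin N)) (R:ℝ))ᶜ)
      refine lt_of_le_of_lt hsplit ?_
      have hts : (0:ℝ) < t^s := Real.rpow_pos_of_pos ht s
      have h1 : t^s/s * (∫ x in (Metric.ball (0:EuclideanSpace ℝ (Fin N)) (R:ℝ))ᶜ,
          |V x| ^ s) < t^s/s * (ε/6 * s / t^s) :=
        mul_lt_mul_of_pos_left hRtail (by positivity)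
      have h1' : t^s/s * (ε/6 * s / t^s) = ε/6 := by
        field_simp
      have h3 : (0:ℝ) < t^q := Real.rpow_pos_of_pos ht q
      have h2 : (t^q)⁻¹/q * (∫ x : EuclideanSpace ℝ (Fin N),
          ((bubble N (μn n) (ξn n) x)^2) ^ q) ≤ (t^q)⁻¹/q * C6 :=
        mul_le_mul_of_nonneg_left (hC6bound n hcase.le) (by positivity)
      have h2' : (t^q)⁻¹/q * C6 ≤ ε/6 := by
        have : (t^q)⁻¹/q * C6 = (t^q)⁻¹ * (C6/q) := by ring
        rw [this]
        exact hterm2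
      linarith
    linarith
end
end

section
/- Let N > 4, let A : ℝ^N → ℝ^N be continuous and bounded, and let V : ℝ^N → ℝ be continuous and bounded. Then for every fixed ξ ∈ ℝ^N, the limit as μ → 0⁺ of μ^{−2} [ (1/2) ∫_{ℝ^N} |A(x)|² z_{μ,ξ}(x)² dx + (1/2) ∫_{ℝ^N} V(x) z_{μ,ξ}(x)² dx ] equals (1/2) (|A(ξ)|² + V(ξ)) ∫_{ℝ^N} z_0(x)² dx. -/
open MeasureTheory Complex Filter

noncomputable section

lemma bubble_one_zero (N : ℕ) (y : EuclideanSpace ℝ (Fin N)) :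
    bubble N 1 0 y = ((N : ℝ) * ((N : ℝ) - 2)) ^ (((N : ℝ) - 2) / 4) /
      (1 + ‖y‖ ^ 2) ^ (((N : ℝ) - 2) / 2) := by
  simp only [bubble, one_pow, Real.one_rpow, mul_one, sub_zero]

lemma bubble_scale (N : ℕ) {μ : ℝ} (hμ : 0 < μ) (ξ y : EuclideanSpace ℝ (Fin N)) :
    bubble N μ ξ (ξ + μ • y) = μ ^ (-(((N : ℝ) - 2) / 2)) * bubble N 1 0 y := by
  set p : ℝ := ((N : ℝ) - 2) / 2 with hp
  set κ : ℝ := ((N : ℝ) * ((N : ℝ) - 2)) ^ (((N : ℝ) - 2) / 4) with hκ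
  have hxi : ‖ξ + μ • y - ξ‖ = μ * ‖y‖ := by
    rw [add_sub_cancel_left, norm_smul, Real.norm_eq_abs, _root_.abs_of_pos hμ]
  have hden : (μ ^ 2 + ‖ξ + μ • y - ξ‖ ^ 2 : ℝ) = μ ^ 2 * (1 + ‖y‖ ^ 2) := by
    rw [hxi]; ring
  have h1 : ((μ : ℝ) ^ 2) ^ p = μ ^ (2 * p) := by
    rw [← Real.rpow_natCast μ 2, ← Real.rpow_mul hμ.le]
    norm_num
  rw [bubble, bubble_one_zero, hden,
    Real.mul_rpow (sq_nonneg μ) (by positivity), h1]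
  rw [show μ ^ (-p) * (κ / (1 + ‖y‖ ^ 2) ^ p) = μ ^ (-p) * κ / (1 + ‖y‖ ^ 2) ^ p from
    (mul_div_assoc _ _ _).symm]
  rw [div_eq_div_iff (by positivity) (by positivity)]
  have key : μ ^ (-p) * μ ^ (2 * p) = μ ^ p := by
    rw [← Real.rpow_add hμ]
    congr 1; ring
  linear_combination (-(κ * (1 + ‖y‖ ^ 2) ^ p)) * key

lemma integrable_bubble_sq (N : ℕ) (hN : 4 < N) :
    Integrable (fun y : EuclideanSpace ℝ (Fin N) => (bubble N 1 0 y) ^ 2) := by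
  have hdim : (Module.finrank ℝ (EuclideanSpace ℝ (Fin N)) : ℝ) < 2 * ((N : ℝ) - 2) := by
    rw [finrank_euclideanSpace_fin]
    have : (4 : ℝ) < (N : ℝ) := by exact_mod_cast hN
    linarith
  have hint := (integrable_rpow_neg_one_add_norm_sq
    (E := EuclideanSpace ℝ (Fin N)) (μ := volume) hdim).const_mul
    ((((N : ℝ) * ((N : ℝ) - 2)) ^ (((N : ℝ) - 2) / 4)) ^ 2)
  refine hint.congr (Filter.Eventually.of_forall fun y => ?_)
  show _ = bubble N 1 0 y ^ 2
  rw [bubble_one_zero, div_pow,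
    ← Real.rpow_natCast ((1 + ‖y‖ ^ 2 : ℝ) ^ (((N : ℝ) - 2) / 2)) 2,
    ← Real.rpow_mul (by positivity : (0:ℝ) ≤ 1 + ‖y‖ ^ 2)]
  rw [eq_div_iff (by positivity), mul_assoc, ← Real.rpow_add (by positivity)]
  rw [show (-(2 * ((N:ℝ) - 2)) / 2 + ((N:ℝ) - 2) / 2 * ((2:ℕ):ℝ) : ℝ) = 0 from by
    push_cast; ring, Real.rpow_zero, mul_one]

lemma continuous_bubble_one_zero (N : ℕ) :
    Continuous (fun y : EuclideanSpace ℝ (Fin N) => bubble N 1 0 y) := by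
  simp only [bubble_one_zero]
  apply Continuous.div continuous_const
  · exact (continuous_const.add (continuous_norm.pow 2)).rpow_const
      (fun y => Or.inl (by positivity : (1:ℝ) + ‖y‖ ^ 2 ≠ 0))
  · intro y
    positivity

lemma integral_bubble_scale (N : ℕ) {μ : ℝ} (hμ : 0 < μ)
    (ξ : EuclideanSpace ℝ (Fin N)) (f : EuclideanSpace ℝ (Fin N) → ℝ) :
    (∫ x, f x * (bubble N μ ξ x) ^ 2) / μ ^ 2
      = ∫ y, f (ξ + μ • y) * (bubble N 1 0 y) ^ 2 := by
  set p : ℝ := ((N : ℝ) - 2) / 2 with hp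
  have key : ∀ y : EuclideanSpace ℝ (Fin N),
      f (ξ + μ • y) * (bubble N 1 0 y) ^ 2
        = μ ^ (2 * p) * (f (ξ + μ • y) * (bubble N μ ξ (ξ + μ • y)) ^ 2) := by
    intro y
    rw [bubble_scale N hμ ξ y, mul_pow]
    have h1 : (μ ^ (-p)) ^ 2 = μ ^ (-(2 * p)) := by
      rw [← Real.rpow_natCast (μ ^ (-p)) 2, ← Real.rpow_mul hμ.le]
      congr 1
      push_cast; ring
    have h2 : μ ^ (2 * p) * μ ^ (-(2 * p)) = 1 := by
      rw [← Real.rpow_add hμ]; simp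
    rw [h1]
    linear_combination (-(f (ξ + μ • y) * bubble N 1 0 y ^ 2)) * h2
  rw [show (∫ y, f (ξ + μ • y) * (bubble N 1 0 y) ^ 2)
      = ∫ y, μ ^ (2 * p) * (f (ξ + μ • y) * (bubble N μ ξ (ξ + μ • y)) ^ 2) from
    integral_congr_ae (Filter.Eventually.of_forall key)]
  rw [integral_const_mul]
  rw [show (∫ y, f (ξ + μ • y) * (bubble N μ ξ (ξ + μ • y)) ^ 2)
      = |((μ : ℝ) ^ Module.finrank ℝ (EuclideanSpace ℝ (Fin N)))⁻¹|
          • ∫ x, f (ξ + x) * (bubble N μ ξ (ξ + x)) ^ 2 from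
    Measure.integral_comp_smul volume (fun x => f (ξ + x) * (bubble N μ ξ (ξ + x)) ^ 2) μ]
  rw [integral_add_left_eq_self (fun x => f x * (bubble N μ ξ x) ^ 2) ξ]
  rw [finrank_euclideanSpace_fin, _root_.abs_of_nonneg (by positivity), smul_eq_mul,
    ← Real.rpow_natCast μ N, ← Real.rpow_neg hμ.le, ← mul_assoc, ← Real.rpow_add hμ]
  have h2 : 2 * p + -(N : ℝ) = -2 := by rw [hp]; ring
  rw [h2, div_eq_mul_inv, mul_comm (∫ x, f x * bubble N μ ξ x ^ 2) ((μ ^ 2 : ℝ)⁻¹)]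
  congr 1
  rw [← Real.rpow_natCast μ 2, ← Real.rpow_neg hμ.le]
  norm_num

lemma key_tendsto (N : ℕ) (hN : 4 < N) (f : EuclideanSpace ℝ (Fin N) → ℝ)
    (hf : Continuous f) (C : ℝ) (hC : ∀ x, |f x| ≤ C) (ξ : EuclideanSpace ℝ (Fin N)) :
    Filter.Tendsto (fun μ : ℝ => (∫ x, f x * (bubble N μ ξ x) ^ 2) / μ ^ 2)
      (nhdsWithin 0 (Set.Ioi 0))
      (nhds (f ξ * ∫ x, (bubble N 1 0 x) ^ 2)) := by
  have hz := integrable_bubble_sq N hN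
  have hzc := continuous_bubble_one_zero N
  have h1 : Tendsto (fun μ : ℝ => ∫ y, f (ξ + μ • y) * (bubble N 1 0 y) ^ 2)
      (nhdsWithin 0 (Set.Ioi 0)) (nhds (∫ y, f ξ * (bubble N 1 0 y) ^ 2)) := by
    apply tendsto_integral_filter_of_dominated_convergence
      (bound := fun y => C * (bubble N 1 0 y) ^ 2)
    · refine Eventually.of_forall fun μ => ?_
      exact ((hf.comp (continuous_const.add (continuous_id.const_smul μ))).mul
        (hzc.pow 2)).aestronglyMeasurable
    · refine Eventually.of_forall fun μ => Eventually.of_forall fun y => ?_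
      rw [Real.norm_eq_abs, _root_.abs_mul, _root_.abs_of_nonneg (sq_nonneg (bubble N 1 0 y))]
      exact mul_le_mul_of_nonneg_right (hC _) (sq_nonneg _)
    · exact hz.const_mul C
    · refine Eventually.of_forall fun y => ?_
      have hc : Continuous (fun μ : ℝ => f (ξ + μ • y)) :=
        hf.comp (continuous_const.add (continuous_id.smul continuous_const))
      have ht : Tendsto (fun μ : ℝ => f (ξ + μ • y)) (nhds 0) (nhds (f ξ)) := by
        simpa using hc.tendsto 0
      exact ((ht.mono_left nhdsWithin_le_nhds).mul_const _)
  have h2 : (fun μ : ℝ => (∫ x, f x * (bubble N μ ξ x) ^ 2) / μ ^ 2)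
      =ᶠ[nhdsWithin (0:ℝ) (Set.Ioi 0)]
      fun μ : ℝ => ∫ y, f (ξ + μ • y) * (bubble N 1 0 y) ^ 2 :=
    eventually_mem_nhdsWithin.mono fun μ hμ => integral_bubble_scale N hμ ξ f
  have h3 : (∫ y, f ξ * (bubble N 1 0 y) ^ 2) = f ξ * ∫ y, (bubble N 1 0 y) ^ 2 :=
    integral_const_mul _ _
  rw [← h3]
  exact h1.congr' h2.symm

/-- Asymptotics of `G₂` as `μ → 0⁺`:
`μ⁻²[(1/2)∫|A|² z_{μ,ξ}² + (1/2)∫V z_{μ,ξ}²] → (1/2)(|A(ξ)|² + V(ξ)) ∫ z_0²`. -/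
theorem G2_asymptotics_mu_zero (N : ℕ) (hN : 4 < N)
    (A : EuclideanSpace ℝ (Fin N) → EuclideanSpace ℝ (Fin N))
    (hAcont : Continuous A) (hAbdd : ∃ C : ℝ, ∀ x, ‖A x‖ ≤ C)
    (V : EuclideanSpace ℝ (Fin N) → ℝ)
    (hVcont : Continuous V) (hVbdd : ∃ C : ℝ, ∀ x, |V x| ≤ C)
    (ξ : EuclideanSpace ℝ (Fin N)) :
    Tendsto (fun μ : ℝ =>
        ((1 / 2) * (∫ x, ‖A x‖ ^ 2 * (bubble N μ ξ x) ^ 2) +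
         (1 / 2) * (∫ x, V x * (bubble N μ ξ x) ^ 2)) / μ ^ 2)
      (nhdsWithin 0 (Set.Ioi 0))
      (nhds ((1 / 2) * (‖A ξ‖ ^ 2 + V ξ) * ∫ x, (bubble N 1 0 x) ^ 2)) := by
  obtain ⟨C, hC⟩ := hAbdd
  obtain ⟨D, hD⟩ := hVbdd
  have k1 := key_tendsto N hN (fun x => ‖A x‖ ^ 2) (hAcont.norm.pow 2) (C ^ 2)
    (fun x => by
      rw [_root_.abs_of_nonneg (by positivity)]
      exact pow_le_pow_left₀ (norm_nonneg _) (hC x) 2) ξ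
  have k2 := key_tendsto N hN V hVcont D hD ξ
  have hsum := (k1.const_mul ((1:ℝ)/2)).add (k2.const_mul ((1:ℝ)/2))
  have hlim : (1/2 : ℝ) * (‖A ξ‖ ^ 2 * ∫ x, (bubble N 1 0 x) ^ 2)
      + (1/2 : ℝ) * (V ξ * ∫ x, (bubble N 1 0 x) ^ 2)
      = (1 / 2) * (‖A ξ‖ ^ 2 + V ξ) * ∫ x, (bubble N 1 0 x) ^ 2 := by ring
  rw [← hlim]
  exact hsum.congr fun μ => by ring
end
end
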